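/- arXiv:1205.1666 — 2 statements merged into one kernel-verified Lean document; each statement's English description precedes it below -/
import Mathlib

section
/- Let k₀ ∈ ℝ and let φ : [k₀, ∞) → [0, ∞) be nonincreasing. Suppose there exist positive constants A, γ, δ with δ > 1 such that φ(h) ≤ A·φ(k)^δ/(h − k)^γ for every h > k ≥ k₀. Then φ(k) = 0 for every k ≥ k₁, where k₁ = k₀ + A^{1/γ}·2^{δ/(δ−1)}·φ(k₀)^{(δ−1)/γ}. -/
open MeasureTheory Metric ENNReal

noncomputable section

/-- Stampacchia's lemma, Lemma 5.2. -/
theorem stmt_14 (k₀ : ℝ) (φ : ℝ → ℝ)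
    (hnn : ∀ k, k₀ ≤ k → 0 ≤ φ k)
    (hmono : ∀ h k, k₀ ≤ k → k ≤ h → φ h ≤ φ k)
    (A γ δ : ℝ) (hA : 0 < A) (hγ : 0 < γ) (hδ : 1 < δ)
    (hineq : ∀ h k, k₀ ≤ k → k < h → φ h ≤ A * φ k ^ δ / (h - k) ^ γ) :
    ∀ k, k₀ + A ^ (1 / γ) * (2 : ℝ) ^ (δ / (δ - 1)) * φ k₀ ^ ((δ - 1) / γ) ≤ k →
      φ k = 0 := by
  have hδ1 : (0:ℝ) < δ - 1 := by linarith
  have hφ0 : 0 ≤ φ k₀ := hnn k₀ le_rfl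
  rcases eq_or_lt_of_le hφ0 with h0 | hpos
  · intro k hk
    rw [← h0, Real.zero_rpow (by positivity : (δ - 1)/γ ≠ 0), mul_zero, add_zero] at hk
    have h1 := hmono k k₀ le_rfl hk
    have h2 := hnn k hk
    rw [← h0] at h1
    linarith
  · set φ₀ := φ k₀ with hφ₀
    set d := A ^ (1 / γ) * (2 : ℝ) ^ (δ / (δ - 1)) * φ₀ ^ ((δ - 1) / γ) with hd_def
    have hd : 0 < d := by positivity
    set μ := γ / (δ - 1) with hμ_def
    have hμ : 0 < μ := by positivity
    set kseq : ℕ → ℝ := fun n => k₀ + (d - d / 2 ^ n) with hkseq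
    have hk0le : ∀ n, k₀ ≤ kseq n := by
      intro n
      have h2n : (1:ℝ) ≤ 2 ^ n := one_le_pow₀ one_le_two
      have : d / 2 ^ n ≤ d := by
        rw [div_le_iff₀ (by positivity)]
        nlinarith
      simp only [hkseq]; linarith
    have hkled : ∀ n, kseq n ≤ k₀ + d := by
      intro n
      have : 0 ≤ d / 2 ^ n := by positivity
      simp only [hkseq]; linarith
    have hstep : ∀ n, kseq (n+1) - kseq n = d / 2 ^ (n+1) := by
      intro n
      simp only [hkseq]
      have h2 : (2:ℝ) ^ (n+1) = 2 * 2 ^ n := by ring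
      field_simp
      ring
    have hlt : ∀ n, kseq n < kseq (n+1) := by
      intro n
      rw [← sub_pos, hstep n]
      positivity
    have hlogd : Real.log d = (1/γ) * Real.log A + (δ/(δ-1)) * Real.log 2
        + ((δ-1)/γ) * Real.log φ₀ := by
      rw [hd_def, Real.log_mul (by positivity) (by positivity),
        Real.log_mul (by positivity) (by positivity),
        Real.log_rpow hA, Real.log_rpow two_pos, Real.log_rpow hpos]
    have key : ∀ n, φ (kseq n) ≤ φ₀ * (2:ℝ) ^ (-(n:ℝ) * μ) := by
      intro n
      induction n with
      | zero =>
        simp only [hkseq, Nat.cast_zero, neg_zero, zero_mul, Real.rpow_zero, pow_zero,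
          div_one, sub_self, add_zero, mul_one]
        exact le_refl _
      | succ n ih =>
        have h1 : φ (kseq (n+1)) ≤ A * φ (kseq n) ^ δ / (kseq (n+1) - kseq n) ^ γ :=
          hineq _ _ (hk0le n) (hlt n)
        rw [hstep n] at h1
        have hφn : 0 ≤ φ (kseq n) := hnn _ (hk0le n)
        have hden : (0:ℝ) < (d / 2 ^ (n+1)) ^ γ := by positivity
        have h3 : φ (kseq (n+1)) ≤ A * (φ₀ * (2:ℝ) ^ (-(n:ℝ) * μ)) ^ δ / (d / 2 ^ (n+1)) ^ γ := by
          refine h1.trans ?_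
          gcongr
        have heq : A * (φ₀ * (2:ℝ) ^ (-(n:ℝ) * μ)) ^ δ / (d / 2 ^ (n+1)) ^ γ
            = φ₀ * (2:ℝ) ^ (-((n:ℝ)+1) * μ) := by
          have hL : (0:ℝ) < A * (φ₀ * (2:ℝ) ^ (-(n:ℝ) * μ)) ^ δ / (d / 2 ^ (n+1)) ^ γ := by
            positivity
          have hR : (0:ℝ) < φ₀ * (2:ℝ) ^ (-((n:ℝ)+1) * μ) := by positivity
          apply Real.log_injOn_pos (Set.mem_Ioi.2 hL) (Set.mem_Ioi.2 hR)
          rw [Real.log_div (by positivity) (by positivity),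
            Real.log_mul (by positivity) (by positivity),
            Real.log_rpow (by positivity), Real.log_rpow (by positivity),
            Real.log_mul (by positivity) (by positivity),
            Real.log_mul (by positivity) (by positivity),
            Real.log_rpow two_pos, Real.log_rpow two_pos,
            Real.log_div (by positivity) (by positivity),
            Real.log_pow, hlogd, hμ_def]
          push_cast
          field_simp
          ring
        rw [heq] at h3
        convert h3 using 3
        push_cast
        ring
    have hzero : φ (k₀ + d) = 0 := by
      have hle : ∀ n : ℕ, φ (k₀ + d) ≤ φ₀ * (2:ℝ) ^ (-(n:ℝ) * μ) := fun n =>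
        (hmono (k₀ + d) (kseq n) (hk0le n) (hkled n)).trans (key n)
      have hr : (2:ℝ) ^ (-μ) < 1 :=
        Real.rpow_lt_one_of_one_lt_of_neg one_lt_two (by linarith)
      have hrn : ∀ n : ℕ, φ₀ * (2:ℝ) ^ (-(n:ℝ) * μ) = φ₀ * ((2:ℝ) ^ (-μ)) ^ n := by
        intro n
        rw [← Real.rpow_natCast ((2:ℝ) ^ (-μ)) n, ← Real.rpow_mul (by norm_num)]
        ring_nf
      have htend : Filter.Tendsto (fun n : ℕ => φ₀ * ((2:ℝ) ^ (-μ)) ^ n)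
          Filter.atTop (nhds 0) := by
        rw [show (0:ℝ) = φ₀ * 0 by ring]
        exact (tendsto_pow_atTop_nhds_zero_of_lt_one (by positivity) hr).const_mul _
      have h1 : φ (k₀ + d) ≤ 0 := by
        refine ge_of_tendsto htend (Filter.Eventually.of_forall fun n => ?_)
        rw [← hrn n]; exact hle n
      have h2 : 0 ≤ φ (k₀ + d) := hnn _ (by linarith)
      linarith
    intro k hk
    have h1 := hmono k (k₀ + d) (by linarith) hk
    have h2 := hnn k (by linarith)
    linarith
end
end

section
/- Let N ≥ 2 be an integer, let p > 2, set α = (p−2)/(p−1) and c₀ = (α + N − 2)^{1/(p−1)}/α, and define u : ℝ^N → ℝ by u(x) = c₀(|x|^α − 1). Then u is twice continuously differentiable on ℝ^N \ {0}, and for every x in the punctured unit ball B₁(0) \ {0} one has Δu(x) = |∇u(x)|^p; that is, u solves the equation −Δu + |∇u|^p = 0 pointwise away from the origin. Explicitly, ∇u(x) = c₀·α·|x|^{α−2}·x and Δu(x) = c₀·α·(α + N − 2)·|x|^{α−2} = (c₀·α·|x|^{α−1})^p for x ≠ 0. -/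
open MeasureTheory Metric ENNReal

noncomputable section

lemma sq_rpow_helper (r : ℝ) (hr : 0 ≤ r) (t : ℝ) : (r ^ 2) ^ t = r ^ (2 * t) := by
  rw [← Real.rpow_natCast r 2, ← Real.rpow_mul hr]
  norm_num

lemma norm_rpow_hasFDerivAt {E : Type*} [NormedAddCommGroup E] [InnerProductSpace ℝ E]
    (β : ℝ) {x : E} (hx : x ≠ 0) :
    HasFDerivAt (fun y => ‖y‖ ^ β) ((β * ‖x‖ ^ (β - 2)) • (innerSL ℝ x)) x := by
  have hR : (0:ℝ) < ‖x‖ := norm_pos_iff.mpr hx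
  have h1 : HasFDerivAt (fun y : E => ‖y‖ ^ 2) ((2:ℕ) • innerSL ℝ x) x :=
    (hasStrictFDerivAt_norm_sq x).hasFDerivAt
  have h2 := h1.rpow_const (p := β / 2) (Or.inl (by positivity))
  have hfun : (fun y : E => ‖y‖ ^ β) = fun y : E => (‖y‖ ^ 2 : ℝ) ^ (β / 2) := by
    funext y
    rw [sq_rpow_helper _ (norm_nonneg y)]
    ring_nf
  rw [hfun]
  convert h2 using 1
  ext v
  simp only [ContinuousLinearMap.smul_apply, ContinuousLinearMap.coe_smul', Pi.smul_apply,
    smul_eq_mul]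
  rw [sq_rpow_helper _ hR.le]
  rw [show 2 * (β / 2 - 1) = β - 2 by ring, nsmul_eq_mul]
  ring

lemma u_hasFDerivAt {E : Type*} [NormedAddCommGroup E] [InnerProductSpace ℝ E]
    (c₀ α : ℝ) {y : E} (hy : y ≠ 0) :
    HasFDerivAt (fun z : E => c₀ * (‖z‖ ^ α - 1))
      ((c₀ * α * ‖y‖ ^ (α - 2)) • innerSL ℝ y) y := by
  have h := ((norm_rpow_hasFDerivAt α hy).sub_const 1).const_mul c₀
  have e : (c₀ * α * ‖y‖ ^ (α - 2)) • innerSL ℝ y = c₀ • (α * ‖y‖ ^ (α - 2)) • innerSL ℝ y := by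
    rw [smul_smul, mul_assoc]
  rw [e]; exact h

/-- The Laplacian of a real-valued function on `ℝ^N`: the trace of the second
derivative, computed in the standard orthonormal basis. -/
def lap {N : ℕ} (u : EuclideanSpace ℝ (Fin N) → ℝ) (x : EuclideanSpace ℝ (Fin N)) : ℝ :=
  ∑ i : Fin N, fderiv ℝ (fun y => fderiv ℝ u y (EuclideanSpace.single i 1)) x
    (EuclideanSpace.single i 1)

lemma lap_formula (N : ℕ) (c₀ α : ℝ) (u : EuclideanSpace ℝ (Fin N) → ℝ)
    (hu : ∀ x, u x = c₀ * (‖x‖ ^ α - 1)) {x : EuclideanSpace ℝ (Fin N)} (hx : x ≠ 0) :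
    lap u x = c₀ * α * ((α - 2) * ‖x‖ ^ (α - 4) * (∑ i, x i * x i) + N * ‖x‖ ^ (α - 2)) := by
  have hu' : u = fun z => c₀ * (‖z‖ ^ α - 1) := funext hu
  have hfd : ∀ y : EuclideanSpace ℝ (Fin N), y ≠ 0 →
      HasFDerivAt u ((c₀ * α * ‖y‖ ^ (α - 2)) • innerSL ℝ y) y := by
    intro y hy; rw [hu']; exact u_hasFDerivAt c₀ α hy
  have hcalc : ∀ i : Fin N,
      fderiv ℝ (fun y => fderiv ℝ u y (EuclideanSpace.single i 1)) x (EuclideanSpace.single i 1)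
      = c₀ * α * ((α - 2) * ‖x‖ ^ (α - 4) * (x i * x i) + ‖x‖ ^ (α - 2)) := by
    intro i
    have hmul := (norm_rpow_hasFDerivAt (α - 2) hx).mul
      ((EuclideanSpace.proj (𝕜 := ℝ) i).hasFDerivAt (x := x))
    have hv := hmul.const_mul (c₀ * α)
    have hev : (fun y => fderiv ℝ u y (EuclideanSpace.single i 1)) =ᶠ[nhds x]
        fun y => (c₀ * α) * (‖y‖ ^ (α - 2) * (EuclideanSpace.proj (𝕜 := ℝ) i) y) := by
      refine (eventually_ne_nhds hx).mono fun y hy => ?_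
      show fderiv ℝ u y (EuclideanSpace.single i 1) = _
      rw [(hfd y hy).fderiv]
      simp [EuclideanSpace.inner_single_right]
      ring
    rw [hev.fderiv_eq, (show HasFDerivAt (fun y => c₀ * α * (‖y‖ ^ (α - 2) * (EuclideanSpace.proj (𝕜 := ℝ) i) y)) _ x from hv).fderiv]
    simp [EuclideanSpace.inner_single_right, EuclideanSpace.single_apply]
    ring_nf
  unfold lap
  rw [Finset.sum_congr rfl fun i _ => hcalc i]
  simp only [mul_add, Finset.sum_add_distrib, Finset.sum_const, Finset.card_univ,
    Fintype.card_fin, nsmul_eq_mul, ← Finset.mul_sum]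
  ring

/-- Remark 3.4, the explicit radial solution `u(x) = c₀(|x|^α − 1)` of
`−Δu + |∇u|^p = 0` with `α = (p−2)/(p−1)`. -/
theorem stmt_16 (N : ℕ) (hN : 2 ≤ N) (p α c₀ : ℝ) (hp : 2 < p)
    (hα : α = (p - 2) / (p - 1))
    (hc₀ : c₀ = (α + N - 2) ^ ((1 : ℝ) / (p - 1)) / α)
    (u : EuclideanSpace ℝ (Fin N) → ℝ)
    (hu : ∀ x, u x = c₀ * (‖x‖ ^ α - 1)) :
    ContDiffOn ℝ 2 u {(0 : EuclideanSpace ℝ (Fin N))}ᶜ ∧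
    (∀ x : EuclideanSpace ℝ (Fin N), x ≠ 0 →
      gradient u x = (c₀ * α * ‖x‖ ^ (α - 2)) • x ∧
      lap u x = c₀ * α * (α + N - 2) * ‖x‖ ^ (α - 2) ∧
      lap u x = (c₀ * α * ‖x‖ ^ (α - 1)) ^ p) ∧
    (∀ x ∈ ball (0 : EuclideanSpace ℝ (Fin N)) 1, x ≠ 0 →
      lap u x = ‖gradient u x‖ ^ p) := by
  have hu' : u = fun z => c₀ * (‖z‖ ^ α - 1) := funext hu
  have hp1 : (0:ℝ) < p - 1 := by linarith
  have hα0 : 0 < α := by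
    rw [hα]; exact div_pos (by linarith) hp1
  have hα1 : α < 1 := by
    rw [hα, div_lt_one hp1]; linarith
  have hN2 : (2:ℝ) ≤ (N:ℝ) := by exact_mod_cast hN
  have hA : 0 < α + (N:ℝ) - 2 := by linarith
  have hc : c₀ * α = (α + (N:ℝ) - 2) ^ ((1:ℝ) / (p - 1)) := by
    rw [hc₀]; field_simp
  have hcpos : 0 < c₀ * α := by
    rw [hc]; exact Real.rpow_pos_of_pos hA _
  -- exponent identities
  have e1 : (α - 1) * p = α - 2 := by
    rw [hα]; field_simp; ring
  have e2 : (c₀ * α) ^ p = (α + (N:ℝ) - 2) * (c₀ * α) := by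
    have h12 : (1:ℝ) / (p - 1) * p = 1 + 1 / (p - 1) := by field_simp; ring
    rw [hc, ← Real.rpow_mul hA.le, h12, Real.rpow_add hA, Real.rpow_one]
  -- gradient
  have hgrad : ∀ x : EuclideanSpace ℝ (Fin N), x ≠ 0 →
      gradient u x = (c₀ * α * ‖x‖ ^ (α - 2)) • x := by
    intro x hx
    have hg : HasGradientAt u ((c₀ * α * ‖x‖ ^ (α - 2)) • x) x := by
      rw [hasGradientAt_iff_hasFDerivAt]
      have hfd : HasFDerivAt u ((c₀ * α * ‖x‖ ^ (α - 2)) • innerSL ℝ x) x := by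
        rw [hu']; exact u_hasFDerivAt c₀ α hx
      have e : (InnerProductSpace.toDual ℝ (EuclideanSpace ℝ (Fin N))) ((c₀ * α * ‖x‖ ^ (α - 2)) • x) = (c₀ * α * ‖x‖ ^ (α - 2)) • innerSL ℝ x := by
        ext v
        simp [InnerProductSpace.toDual_apply_apply, real_inner_smul_left]
      rw [e]; exact hfd
    exact hg.gradient
  -- laplacian
  have hlap : ∀ x : EuclideanSpace ℝ (Fin N), x ≠ 0 →
      lap u x = c₀ * α * (α + (N:ℝ) - 2) * ‖x‖ ^ (α - 2) := by
    intro x hx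
    have hR : (0:ℝ) < ‖x‖ := norm_pos_iff.mpr hx
    have hS : (∑ i, x i * x i) = ‖x‖ ^ 2 := by
      rw [← real_inner_self_eq_norm_sq]
      simp only [PiLp.inner_apply, RCLike.inner_apply, conj_trivial]
    have hR2 : ‖x‖ ^ (α - 4) * ‖x‖ ^ (2:ℕ) = ‖x‖ ^ (α - 2) := by
      rw [← Real.rpow_natCast ‖x‖ 2, ← Real.rpow_add hR]
      congr 1
      push_cast
      ring
    rw [lap_formula N c₀ α u hu hx, hS]
    rw [show (α - 2) * ‖x‖ ^ (α - 4) * ‖x‖ ^ 2 = (α - 2) * (‖x‖ ^ (α - 4) * ‖x‖ ^ (2:ℕ)) by ring,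
      hR2]
    ring
  have hlap2 : ∀ x : EuclideanSpace ℝ (Fin N), x ≠ 0 →
      lap u x = (c₀ * α * ‖x‖ ^ (α - 1)) ^ p := by
    intro x hx
    have hR : (0:ℝ) < ‖x‖ := norm_pos_iff.mpr hx
    calc lap u x = c₀ * α * (α + (N:ℝ) - 2) * ‖x‖ ^ (α - 2) := hlap x hx
      _ = (c₀ * α) ^ p * ‖x‖ ^ ((α - 1) * p) := by rw [e2, e1]; ring
      _ = (c₀ * α) ^ p * (‖x‖ ^ (α - 1)) ^ p := by rw [Real.rpow_mul hR.le]
      _ = (c₀ * α * ‖x‖ ^ (α - 1)) ^ p := by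
          rw [Real.mul_rpow hcpos.le (Real.rpow_pos_of_pos hR _).le]
  refine ⟨?_, fun x hx => ⟨hgrad x hx, hlap x hx, hlap2 x hx⟩, fun x _ hx => ?_⟩
  · intro x hx
    have hx0 : x ≠ 0 := hx
    have hne : (‖x‖:ℝ) ^ 2 ≠ 0 := pow_ne_zero 2 (norm_ne_zero_iff.mpr hx0)
    have h1 : ContDiffAt ℝ 2 (fun y : EuclideanSpace ℝ (Fin N) => (‖y‖ ^ 2 : ℝ)) x :=
      (contDiff_norm_sq (𝕜 := ℝ)).contDiffAt
    have h2 : ContDiffAt ℝ 2 (fun t : ℝ => t ^ (α / 2)) ((‖x‖:ℝ) ^ 2) :=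
      Real.contDiffAt_rpow_const_of_ne hne
    have h3 := h2.comp x h1
    have hue : u = fun y : EuclideanSpace ℝ (Fin N) => c₀ * ((‖y‖ ^ 2 : ℝ) ^ (α / 2) - 1) := by
      funext y
      rw [hu y, sq_rpow_helper _ (norm_nonneg y)]
      ring_nf
    rw [hue]
    exact (contDiffAt_const.mul (h3.sub contDiffAt_const)).contDiffWithinAt
  · have hR : (0:ℝ) < ‖x‖ := norm_pos_iff.mpr hx
    rw [hlap2 x hx, hgrad x hx]
    congr 1
    rw [norm_smul, Real.norm_eq_abs,
      abs_of_pos (mul_pos hcpos (Real.rpow_pos_of_pos hR _)),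
      show α - 1 = α - 2 + 1 by ring, Real.rpow_add hR, Real.rpow_one]
    ring
end
end
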